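/- arXiv:2110.10503 — 6 statements merged into one kernel-verified Lean document; each statement's English description precedes it below -/
import Mathlib

section
/- The map Z^{-1} satisfies the integral identity Z^{-1}(s) = x₀ + ∫_0^s v(Z^{-1}(u)) du for all s ∈ ℝ. -/
open MeasureTheory intervalIntegral

/-! An increasing bijection `e` of `ℝ` with `∫_a^b g = e b - e a` pushes the measure `g dx`
forward to Lebesgue measure, since both give `Ioc a b` the mass `b - a`. Hence
`∫_a^b h (e⁻¹ u) du = ∫_{e⁻¹ a}^{e⁻¹ b} g x h x dx`; for `e = Z`, `g = 1/v`, `h = v` the integrand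
on the right is `1`. -/

lemma intervalIntegrable_one_div_of_ae_le {v : ℝ → ℝ} {c : ℝ} (hc : 0 < c) (hv : Measurable v)
    (hcv : ∀ᵐ x, c ≤ v x) (a b : ℝ) : IntervalIntegrable (fun x => 1 / v x) volume a b := by
  refine (intervalIntegrable_const (c := 1 / c)).mono_fun'
    (measurable_const.div hv).aestronglyMeasurable ?_
  filter_upwards [ae_restrict_of_ae hcv] with x hx
  rw [Real.norm_eq_abs, abs_of_pos (one_div_pos.2 (hc.trans_le hx))]
  exact one_div_le_one_div_of_le hc hx

section OrderIsoPrimitive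

variable (e : ℝ ≃o ℝ) {g : ℝ → ℝ} (hg_int : ∀ a b, IntervalIntegrable g volume a b)
  (hg_nonneg : 0 ≤ᵐ[volume] g) (he : ∀ a b, ∫ x in a..b, g x = e b - e a)
include hg_int hg_nonneg he

lemma OrderIso.map_withDensity_eq_volume :
    (volume.withDensity fun x => ENNReal.ofReal (g x)).map e = volume := by
  have hemb : MeasurableEmbedding e := e.toHomeomorph.toMeasurableEquiv.measurableEmbedding
  refine (Measure.ext_of_Ioc' _ _ (fun a b _ => measure_Ioc_lt_top.ne) fun a b hab => ?_).symm
  rw [hemb.map_apply, e.preimage_Ioc, withDensity_apply _ measurableSet_Ioc,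
    ← ofReal_integral_eq_lintegral_ofReal (hg_int _ _).1 (ae_restrict_of_ae hg_nonneg),
    ← integral_of_le (e.symm.monotone hab.le), he, e.apply_symm_apply, e.apply_symm_apply,
    Real.volume_Ioc]

lemma OrderIso.intervalIntegral_comp_symm_eq_integral_smul
    {E : Type*} [NormedAddCommGroup E] [NormedSpace ℝ E] (hg : Measurable g) (h : ℝ → E) (a b : ℝ) :
    ∫ u in a..b, h (e.symm u) = ∫ x in e.symm a..e.symm b, g x • h x := by
  wlog hab : a ≤ b generalizing a b
  · rw [integral_symm, this b a (le_of_not_ge hab), integral_symm, neg_neg]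
  have hemb : MeasurableEmbedding e := e.toHomeomorph.toMeasurableEquiv.measurableEmbedding
  rw [integral_of_le hab, integral_of_le (e.symm.monotone hab)]
  conv_lhs => rw [← e.map_withDensity_eq_volume hg_int hg_nonneg he]
  rw [hemb.setIntegral_map, e.preimage_Ioc]
  simp only [OrderIso.symm_apply_apply]
  rw [restrict_withDensity measurableSet_Ioc, integral_withDensity_eq_integral_toReal_smul
    hg.ennreal_ofReal (ae_of_all _ fun _ => ENNReal.ofReal_lt_top)]
  refine integral_congr_ae ?_
  filter_upwards [ae_restrict_of_ae hg_nonneg] with x hx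
  rw [ENNReal.toReal_ofReal hx]

end OrderIsoPrimitive

theorem stmt4_general
    (v : ℝ → ℝ) (vlow C : ℝ) (hvlow : 0 < vlow)
    (hmeas : Measurable v)
    (hbd : ∀ᵐ x : ℝ, vlow ≤ v x ∧ v x ≤ C)
    (x₀ : ℝ) (Z Zinv : ℝ → ℝ)
    (hZ : ∀ x, Z x = ∫ s in x₀..x, 1 / v s)
    (hinv : Function.RightInverse Zinv Z ∧ Function.LeftInverse Zinv Z) :
    ∀ s : ℝ, Zinv s = x₀ + ∫ u in (0:ℝ)..s, v (Zinv u) := by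
  intro s
  obtain ⟨hri, hli⟩ := hinv
  have hpos : ∀ᵐ x, 0 < v x := hbd.mono fun x hx => hvlow.trans_le hx.1
  have hnonneg : 0 ≤ᵐ[volume] fun x => 1 / v x := hpos.mono fun x hx => (one_div_pos.2 hx).le
  have hint := intervalIntegrable_one_div_of_ae_le hvlow hmeas (hbd.mono fun x hx => hx.1)
  have hZsub : ∀ a b, ∫ x in a..b, 1 / v x = Z b - Z a := fun a b => by
    rw [hZ, hZ, integral_interval_sub_left (hint _ _) (hint _ _)]
  have hZmono : Monotone Z := fun a b hab =>
    sub_nonneg.1 (hZsub a b ▸ integral_nonneg_of_ae hab hnonneg)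
  let e := (hZmono.strictMono_of_injective hli.injective).orderIsoOfRightInverse Z Zinv hri
  have hZinv0 : Zinv 0 = x₀ := by rw [← hli x₀, hZ, integral_same]
  have hcov := e.intervalIntegral_comp_symm_eq_integral_smul hint hnonneg hZsub
    (measurable_const.div hmeas) v 0 s
  have he_symm : ⇑e.symm = Zinv := StrictMono.orderIsoOfRightInverse_symm_apply ..
  rw [he_symm, hZinv0] at hcov
  rw [hcov, intervalIntegral.integral_congr_ae (g := fun _ => (1 : ℝ)) ?_,
    intervalIntegral.integral_const, smul_eq_mul, mul_one]
  · ring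
  filter_upwards [hpos] with x hx _
  rw [smul_eq_mul, one_div_mul_cancel hx.ne']

/-- The inverse of the surrogate map `Z(x) = ∫_{x₀}^x 1/v` satisfies
`Z⁻¹(s) = x₀ + ∫_0^s v(Z⁻¹(u)) du` for all `s ∈ ℝ`. -/
theorem stmt4
    (v : ℝ → ℝ) (vlow C : ℝ) (hvlow : 0 < vlow)
    (hmeas : Measurable v)
    (hbd : ∀ᵐ x : ℝ, vlow ≤ v x ∧ v x ≤ C)
    (x₀ : ℝ) (Z Zinv : ℝ → ℝ)
    (hZ : ∀ x, Z x = ∫ s in x₀..x, 1 / v s)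
    (hbij : Function.Bijective Z)
    (hinv : Function.RightInverse Zinv Z ∧ Function.LeftInverse Zinv Z) :
    ∀ s : ℝ, Zinv s = x₀ + ∫ u in (0:ℝ)..s, v (Zinv u) :=
  stmt4_general v vlow C hvlow hmeas hbd x₀ Z Zinv hZ hinv
end

section
/- Stability of Z in data: for all x₀, x̃₀, u ∈ ℝ and all measurable v, ṽ bounded below by v̲ > 0, |Z[v](x₀; u) − Z[ṽ](x̃₀; u)| ≤ (1/v̲)|x₀ − x̃₀| + (1/v̲²) ‖v − ṽ‖_{L¹(I)}, where I = (min{x₀, x̃₀, u}, max{x₀, x̃₀, u}). -/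
open MeasureTheory intervalIntegral Set

/-! Split `∫_{x₀}^u 1/v - ∫_{x̃₀}^u 1/ṽ` as `∫_{x₀}^{x̃₀} 1/v + ∫_{x̃₀}^u (1/v - 1/ṽ)`. The first
term is at most `|x₀ - x̃₀| / v̲` since `1/v ≤ 1/v̲`, and the integrand of the second is bounded
pointwise by `|v - ṽ| / v̲²` because `|1/a - 1/b| = |a - b| / (a b)`. -/

lemma abs_one_div_sub_one_div_le {a b c : ℝ} (hc : 0 < c) (ha : c ≤ a) (hb : c ≤ b) :
    |1 / a - 1 / b| ≤ 1 / c ^ 2 * |a - b| := by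
  have ha' : 0 < a := hc.trans_le ha
  have hb' : 0 < b := hc.trans_le hb
  rw [div_sub_div _ _ ha'.ne' hb'.ne', abs_div, abs_of_pos (mul_pos ha' hb'), one_mul, mul_one,
    abs_sub_comm, one_div_mul_eq_div]
  exact div_le_div_of_nonneg_left (abs_nonneg _) (by positivity) (by nlinarith)

lemma intervalIntegral_sub_intervalIntegral_eq {f g : ℝ → ℝ} {a b c : ℝ}
    (hfab : IntervalIntegrable f volume a b) (hfbc : IntervalIntegrable f volume b c)
    (hgbc : IntervalIntegrable g volume b c) :
    (∫ s in a..c, f s) - ∫ s in b..c, g s = (∫ s in a..b, f s) + ∫ s in b..c, (f s - g s) := by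
  rw [integral_sub hfbc hgbc, ← integral_add_adjacent_intervals hfab hfbc]
  ring

lemma abs_intervalIntegral_le_setIntegral_Ioo {f g : ℝ → ℝ} {a b m M : ℝ}
    (hm : m ≤ min a b) (hM : max a b ≤ M) (hg : IntegrableOn g (Ioo m M))
    (hg0 : ∀ s, 0 ≤ g s) (hfg : ∀ᵐ s, |f s| ≤ g s) :
    |∫ s in a..b, f s| ≤ ∫ s in Ioo m M, g s := by
  have hg' : IntegrableOn g (Ioc m M) := (integrableOn_Ioc_iff_integrableOn_Ioo (f := g)).mpr hg
  have hsub : uIoc a b ⊆ Ioc m M := Ioc_subset_Ioc hm hM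
  rw [← Real.norm_eq_abs, norm_integral_eq_norm_integral_uIoc, ← integral_Ioc_eq_integral_Ioo]
  calc ‖∫ s in uIoc a b, f s‖ ≤ ∫ s in uIoc a b, g s :=
        norm_integral_le_of_norm_le (hg'.mono_set hsub) (ae_restrict_of_ae hfg)
    _ ≤ ∫ s in Ioc m M, g s :=
        setIntegral_mono_set hg' (ae_of_all _ hg0) (Filter.Eventually.of_forall hsub)

section LowerBound

variable {c : ℝ} {v : ℝ → ℝ}

lemma ae_abs_one_div_le (hc : 0 < c) (hv : ∀ᵐ y, c ≤ v y) : ∀ᵐ y, |1 / v y| ≤ 1 / c := by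
  filter_upwards [hv] with y hy
  rw [abs_of_pos (one_div_pos.mpr (hc.trans_le hy))]
  exact one_div_le_one_div_of_le hc hy

lemma intervalIntegrable_one_div (hc : 0 < c) (hmeas : Measurable v) (hv : ∀ᵐ y, c ≤ v y)
    (a b : ℝ) : IntervalIntegrable (fun s => 1 / v s) volume a b :=
  intervalIntegrable_iff.mpr <| Measure.integrableOn_of_bounded measure_Ioc_lt_top.ne
    (hmeas.const_div 1).aestronglyMeasurable (ae_restrict_of_ae (ae_abs_one_div_le hc hv))

lemma abs_intervalIntegral_one_div_le (hc : 0 < c) (hv : ∀ᵐ y, c ≤ v y) (a b : ℝ) :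
    |∫ s in a..b, 1 / v s| ≤ 1 / c * |a - b| := by
  rw [abs_sub_comm]
  exact norm_integral_le_of_norm_le_const_ae (f := fun s => 1 / v s) <|
    (ae_abs_one_div_le hc hv).mono fun _ hy _ => hy

end LowerBound

lemma integrableOn_abs_sub {α : Type*} [MeasurableSpace α] {μ : Measure α} {v w : α → ℝ}
    {s : Set α} (hs : μ s ≠ ⊤) {c C C' : ℝ} (hc : 0 ≤ c) (hv : Measurable v) (hw : Measurable w)
    (hvc : ∀ᵐ y ∂μ, c ≤ v y) (hwc : ∀ᵐ y ∂μ, c ≤ w y) (hvC : ∀ᵐ y ∂μ, v y ≤ C)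
    (hwC : ∀ᵐ y ∂μ, w y ≤ C') :
    IntegrableOn (fun y => |v y - w y|) s μ := by
  refine Measure.integrableOn_of_bounded hs (hv.sub hw).abs.aestronglyMeasurable
    (M := C + C') (ae_restrict_of_ae ?_)
  filter_upwards [hvc, hwc, hvC, hwC] with y h1 h2 h3 h4
  rw [Real.norm_eq_abs, abs_abs, abs_le]
  constructor <;> linarith

/-- Stability of the surrogate map `Z[v](x₀; u) = ∫_{x₀}^u 1/v` in the data:
`|Z[v](x₀;u) − Z[ṽ](x̃₀;u)| ≤ (1/v̲)|x₀ − x̃₀| + (1/v̲²)‖v − ṽ‖_{L¹(I)}`,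
`I = (min{x₀,x̃₀,u}, max{x₀,x̃₀,u})`. -/
theorem stmt6
    (vlow : ℝ) (hvlow : 0 < vlow)
    (v vt : ℝ → ℝ) (hmeas : Measurable v) (hmeast : Measurable vt)
    (hv : ∀ᵐ y : ℝ, vlow ≤ v y) (hvt : ∀ᵐ y : ℝ, vlow ≤ vt y)
    (hvbd : ∃ C, ∀ᵐ y : ℝ, v y ≤ C) (hvtbd : ∃ C, ∀ᵐ y : ℝ, vt y ≤ C)
    (x₀ xt₀ u : ℝ) :
    |(∫ s in x₀..u, 1 / v s) - ∫ s in xt₀..u, 1 / vt s| ≤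
      (1 / vlow) * |x₀ - xt₀| +
      (1 / vlow ^ 2) *
        ∫ s in Ioo (min x₀ (min xt₀ u)) (max x₀ (max xt₀ u)), |v s - vt s| := by
  obtain ⟨C, hC⟩ := hvbd
  obtain ⟨Ct, hCt⟩ := hvtbd
  have hint := intervalIntegrable_one_div hvlow hmeas hv
  have hdiff : |∫ s in xt₀..u, (1 / v s - 1 / vt s)| ≤
      ∫ s in Ioo (min x₀ (min xt₀ u)) (max x₀ (max xt₀ u)), 1 / vlow ^ 2 * |v s - vt s| := by
    refine abs_intervalIntegral_le_setIntegral_Ioo (min_le_right _ _) (le_max_right _ _)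
      ((integrableOn_abs_sub measure_Ioo_lt_top.ne hvlow.le hmeas hmeast hv hvt hC hCt).const_mul _)
      (fun _ => by positivity) ?_
    filter_upwards [hv, hvt] with y h1 h2
    exact abs_one_div_sub_one_div_le hvlow h1 h2
  rw [intervalIntegral_sub_intervalIntegral_eq (hint _ _) (hint _ _)
    (intervalIntegrable_one_div hvlow hmeast hvt _ _), ← MeasureTheory.integral_const_mul]
  exact (abs_add_le _ _).trans (add_le_add (abs_intervalIntegral_one_div_le hvlow hv _ _) hdiff)
end

section
/- For smooth data, the derivative of the flow in the initial datum has the explicit formula ∂_{x₀} X(x₀; t) = (v(X(x₀;t)) / v(x₀)) · exp(∫_0^t ∂₂λ(s, X(x₀;s)) v(X(x₀;s)) ds) for all t ∈ [0,T]. -/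
/-!
If `X y` and `X z` solve `x' = f(t, x)`, Hadamard's lemma writes `f t (X y t) - f t (X z t)` as
`a(t) (X y t - X z t)`, with `a(t)` the mean of `∂ₓf t` over the segment between the two
trajectories. The difference therefore solves a scalar linear equation and equals
`(y - z) exp ∫₀ᵗ a`. Trajectories starting near `x₀` stay in a compact set, where `a` is bounded;
so `X y → X x₀` pointwise and, by dominated convergence, the difference quotient tends to
`exp ∫₀ᵗ ∂ₓf(s, X x₀ s) ds`. For `f = v λ` the term `v' λ` of `∂ₓf` integrates along the
trajectory to `log v(X x₀ t) - log v(x₀)`.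
-/

open MeasureTheory intervalIntegral Set Function Filter Topology

noncomputable def integralSlope (F' : ℝ → ℝ) (a b : ℝ) : ℝ :=
  ∫ τ in (0:ℝ)..1, F' (a + τ * (b - a))

@[simp]
theorem integralSlope_self (F' : ℝ → ℝ) (a : ℝ) : integralSlope F' a a = F' a := by
  simp [integralSlope]

theorem sub_eq_integralSlope_mul {F F' : ℝ → ℝ} (hF : ∀ x, HasDerivAt F (F' x) x)
    (hF' : Continuous F') (a b : ℝ) : F b - F a = integralSlope F' a b * (b - a) := by
  have hsegment : ∀ τ ∈ uIcc (0:ℝ) 1,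
      HasDerivAt (fun τ => F (a + τ * (b - a))) (F' (a + τ * (b - a)) * (b - a)) τ := fun τ _ =>
    (hF _).comp τ (((hasDerivAt_id τ).mul_const (b - a)).const_add a |>.congr_deriv (one_mul _))
  have hint : IntervalIntegrable (fun τ => F' (a + τ * (b - a)) * (b - a)) volume 0 1 :=
    (by fun_prop : Continuous fun τ => F' (a + τ * (b - a)) * (b - a)).intervalIntegrable 0 1
  rw [integralSlope, ← intervalIntegral.integral_mul_const,
    integral_eq_sub_of_hasDerivAt hsegment hint]
  simp

theorem abs_integralSlope_le {F' : ℝ → ℝ} {K : Set ℝ} (hK : Convex ℝ K) {a b L : ℝ}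
    (ha : a ∈ K) (hb : b ∈ K) (hL : ∀ x ∈ K, |F' x| ≤ L) : |integralSlope F' a b| ≤ L := by
  have h := norm_integral_le_of_norm_le_const (a := 0) (b := 1) (C := L)
    (f := fun τ => F' (a + τ * (b - a))) fun τ hτ => by
      rw [uIoc_of_le zero_le_one] at hτ
      exact hL _ (hK.add_smul_sub_mem ha hb ⟨hτ.1.le, hτ.2⟩)
  simpa [integralSlope] using h

theorem continuous_integralSlope {f' : ℝ → ℝ → ℝ} (hf' : Continuous (uncurry f')) :
    Continuous fun p : ℝ × ℝ × ℝ => integralSlope (f' p.1) p.2.1 p.2.2 := by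
  unfold integralSlope
  apply continuous_parametric_intervalIntegral_of_continuous' (f := fun (p : ℝ × ℝ × ℝ) τ =>
    f' p.1 (p.2.1 + τ * (p.2.2 - p.2.1)))
  exact hf'.comp₂ (by fun_prop) (by fun_prop)

theorem eq_mul_exp_integral_of_hasDerivWithinAt {k D : ℝ → ℝ} {a b : ℝ}
    (hk : ContinuousOn k (Icc a b)) (hD : ContinuousOn D (Icc a b))
    (hD' : ∀ u ∈ Ico a b, HasDerivWithinAt D (k u * D u) (Ici u) u) :
    ∀ x ∈ Icc a b, D x = D a * Real.exp (∫ u in a..x, k u) := by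
  intro x hx
  have hab : a ≤ b := hx.1.trans hx.2
  set P : ℝ → ℝ := fun x => ∫ u in a..x, k u
  have hP : ∀ u ∈ Ico a b, HasDerivWithinAt P (k u) (Ici u) u := fun u hu => by
    have hnhds : Icc a b ∈ 𝓝[>] u := Icc_mem_nhdsGT_of_mem hu
    refine integral_hasDerivWithinAt_right (t := Ioi u)
      ((hk.mono (Icc_subset_Icc_right hu.2.le)).intervalIntegrable_of_Icc hu.1) ?_
      ((hk u (Ico_subset_Icc_self hu)).mono_of_mem_nhdsWithin hnhds)
    exact (hk.stronglyMeasurableAtFilter_nhdsWithin measurableSet_Icc u).filter_mono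
      (nhdsWithin_le_of_mem hnhds)
  have hPcont : ContinuousOn P (Icc a b) := by
    simpa only [uIcc_of_le hab] using
      continuousOn_primitive_interval' (hk.intervalIntegrable_of_Icc hab) left_mem_uIcc
  have hconst := constant_of_has_deriv_right_zero (f := fun x => D x * Real.exp (-P x))
    (hD.mul (Real.continuous_exp.comp_continuousOn hPcont.neg)) fun u hu =>
      ((hD' u hu).mul (hP u hu).neg.exp).congr_deriv (by simp only [Pi.neg_apply]; ring)
  have := hconst x hx
  simp only [P, integral_same, neg_zero, Real.exp_zero, mul_one] at this
  rw [← this, mul_assoc, ← Real.exp_add, neg_add_cancel, Real.exp_zero, mul_one]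

theorem hasDerivAt_of_sub_eq_mul {F G : ℝ → ℝ} {x : ℝ} (h : ∀ y, F y - F x = (y - x) * G y)
    (hG : ContinuousAt G x) : HasDerivAt F (G x) x := by
  rw [hasDerivAt_iff_tendsto_slope]
  refine (hG.tendsto.mono_left nhdsWithin_le_nhds).congr' ?_
  filter_upwards [self_mem_nhdsWithin] with y hy
  rw [slope_def_field, h, mul_div_cancel_left₀ _ (sub_ne_zero.mpr hy)]

section Flow

variable {f f' : ℝ → ℝ → ℝ} {X : ℝ → ℝ → ℝ} {T M : ℝ}

theorem continuousOn_integralSlope_flow (hf' : Continuous (uncurry f'))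
    (hX : ∀ y, ∀ t ∈ Icc 0 T, HasDerivAt (X y) (f t (X y t)) t) (y z : ℝ) :
    ContinuousOn (fun s => integralSlope (f' s) (X z s) (X y s)) (Icc 0 T) :=
  (continuous_integralSlope hf').comp_continuousOn (continuousOn_id.prodMk
    ((HasDerivAt.continuousOn (hX z)).prodMk (HasDerivAt.continuousOn (hX y))))

theorem flow_sub_flow_eq (hf : ∀ s x, HasDerivAt (f s) (f' s x) x)
    (hf' : Continuous (uncurry f')) (hX : ∀ y, ∀ t ∈ Icc 0 T, HasDerivAt (X y) (f t (X y t)) t)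
    (y z : ℝ) : ∀ r ∈ Icc 0 T, X y r - X z r =
      (X y 0 - X z 0) * Real.exp (∫ s in (0:ℝ)..r, integralSlope (f' s) (X z s) (X y s)) := by
  refine eq_mul_exp_integral_of_hasDerivWithinAt (D := fun s => X y s - X z s)
    (continuousOn_integralSlope_flow hf' hX y z)
    ((HasDerivAt.continuousOn (hX y)).sub (HasDerivAt.continuousOn (hX z))) fun u hu => ?_
  have huT := Ico_subset_Icc_self hu
  rw [← sub_eq_integralSlope_mul (hf u) (hf'.uncurry_left u)]
  exact ((hX y u huT).sub (hX z u huT)).hasDerivWithinAt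

theorem abs_flow_sub_initial_le (hfM : ∀ s x, |f s x| ≤ M)
    (hX : ∀ y, ∀ t ∈ Icc 0 T, HasDerivAt (X y) (f t (X y t)) t) (y : ℝ) :
    ∀ t ∈ Icc 0 T, |X y t - X y 0| ≤ M * t := by
  simpa using norm_image_sub_le_of_norm_deriv_le_segment'
    (fun t ht => (hX y t ht).hasDerivWithinAt) (fun t _ => hfM t (X y t))

theorem exists_abs_integralSlope_flow_le (hf' : Continuous (uncurry f'))
    (hfM : ∀ s x, |f s x| ≤ M) (hX0 : ∀ y, X y 0 = y)
    (hX : ∀ y, ∀ t ∈ Icc 0 T, HasDerivAt (X y) (f t (X y t)) t) (x₀ : ℝ) :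
    ∃ L, ∀ y, |y - x₀| ≤ 1 → ∀ s ∈ Icc 0 T, |integralSlope (f' s) (X x₀ s) (X y s)| ≤ L := by
  set K := Metric.closedBall x₀ (1 + M * T)
  obtain ⟨L, hL⟩ := (isCompact_Icc.prod (isCompact_closedBall x₀ (1 + M * T)))
    |>.exists_bound_of_continuousOn hf'.continuousOn
  have hM : 0 ≤ M := (abs_nonneg _).trans (hfM 0 0)
  have hXK : ∀ y, |y - x₀| ≤ 1 → ∀ s ∈ Icc 0 T, X y s ∈ K := fun y hy s hs => by
    have hdrift := abs_flow_sub_initial_le hfM hX y s hs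
    rw [hX0] at hdrift
    rw [Metric.mem_closedBall, Real.dist_eq]
    calc |X y s - x₀| ≤ |X y s - y| + |y - x₀| := abs_sub_le _ _ _
      _ ≤ M * T + 1 := add_le_add (hdrift.trans (mul_le_mul_of_nonneg_left hs.2 hM)) hy
      _ = 1 + M * T := add_comm _ _
  exact ⟨L, fun y hy s hs => abs_integralSlope_le (convex_closedBall _ _)
    (hXK x₀ (by simp) s hs) (hXK y hy s hs) fun x hx => hL (s, x) ⟨hs, hx⟩⟩

theorem continuousAt_flow (hf : ∀ s x, HasDerivAt (f s) (f' s x) x)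
    (hf' : Continuous (uncurry f')) (hfM : ∀ s x, |f s x| ≤ M) (hX0 : ∀ y, X y 0 = y)
    (hX : ∀ y, ∀ t ∈ Icc 0 T, HasDerivAt (X y) (f t (X y t)) t) (x₀ : ℝ) :
    ∀ s ∈ Icc 0 T, ContinuousAt (fun y => X y s) x₀ := by
  intro s hs
  obtain ⟨L, hL⟩ := exists_abs_integralSlope_flow_le hf' hfM hX0 hX x₀
  have hsub : uIoc 0 s ⊆ Icc 0 T :=
    uIoc_subset_uIcc.trans (uIcc_subset_Icc (left_mem_Icc.2 (hs.1.trans hs.2)) hs)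
  have hclose : ∀ y, |y - x₀| ≤ 1 → |X y s - X x₀ s| ≤ Real.exp (L * s) * |y - x₀| := fun y hy => by
    rw [flow_sub_flow_eq hf hf' hX y x₀ s hs, hX0, hX0, abs_mul, Real.abs_exp, mul_comm]
    have hint := norm_integral_le_of_norm_le_const (a := 0) (b := s) (C := L)
      (f := fun u => integralSlope (f' u) (X x₀ u) (X y u))
      fun u hu => hL y hy u (hsub hu)
    rw [Real.norm_eq_abs, sub_zero, abs_of_nonneg hs.1] at hint
    gcongr
    exact (le_abs_self _).trans hint
  rw [ContinuousAt, tendsto_iff_norm_sub_tendsto_zero]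
  refine squeeze_zero' (g := fun y => Real.exp (L * s) * |y - x₀|)
    (Eventually.of_forall fun _ => norm_nonneg _) ?_ ?_
  · filter_upwards [Metric.closedBall_mem_nhds x₀ one_pos] with y hy
    exact hclose y (by simpa [Real.dist_eq] using hy)
  · simpa using ((continuous_id.sub (continuous_const (y := x₀))).abs.const_mul
      (Real.exp (L * s))).tendsto x₀

theorem continuousAt_integral_integralSlope_flow (hf : ∀ s x, HasDerivAt (f s) (f' s x) x)
    (hf' : Continuous (uncurry f')) (hfM : ∀ s x, |f s x| ≤ M) (hX0 : ∀ y, X y 0 = y)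
    (hX : ∀ y, ∀ t ∈ Icc 0 T, HasDerivAt (X y) (f t (X y t)) t) (x₀ : ℝ) {t : ℝ}
    (ht : t ∈ Icc 0 T) :
    ContinuousAt (fun y => ∫ s in (0:ℝ)..t, integralSlope (f' s) (X x₀ s) (X y s)) x₀ := by
  obtain ⟨L, hL⟩ := exists_abs_integralSlope_flow_le hf' hfM hX0 hX x₀
  have hsub : uIoc 0 t ⊆ Icc 0 T :=
    uIoc_subset_uIcc.trans (uIcc_subset_Icc (left_mem_Icc.2 (ht.1.trans ht.2)) ht)
  refine continuousAt_of_dominated_interval (bound := fun _ => L)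
    (Eventually.of_forall fun y => ((continuousOn_integralSlope_flow hf' hX y x₀).mono hsub)
      |>.aestronglyMeasurable measurableSet_uIoc) ?_ intervalIntegrable_const
    (Eventually.of_forall fun s hs => ?_)
  · filter_upwards [Metric.closedBall_mem_nhds x₀ one_pos] with y hy
    exact Eventually.of_forall fun s hs => hL y (by simpa [Real.dist_eq] using hy) s (hsub hs)
  · exact (continuous_integralSlope hf').continuousAt.comp (f := fun y => (s, X x₀ s, X y s))
      (continuousAt_const.prodMk (continuousAt_const.prodMk
        (continuousAt_flow hf hf' hfM hX0 hX x₀ s (hsub hs))))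

theorem hasDerivAt_flow_initial (hf : ∀ s x, HasDerivAt (f s) (f' s x) x)
    (hf' : Continuous (uncurry f')) (hfM : ∀ s x, |f s x| ≤ M) (hX0 : ∀ y, X y 0 = y)
    (hX : ∀ y, ∀ t ∈ Icc 0 T, HasDerivAt (X y) (f t (X y t)) t) :
    ∀ x₀, ∀ t ∈ Icc 0 T,
      HasDerivAt (fun y => X y t) (Real.exp (∫ s in (0:ℝ)..t, f' s (X x₀ s))) x₀ := by
  intro x₀ t ht
  simpa only [integralSlope_self] using hasDerivAt_of_sub_eq_mul (F := fun y => X y t)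
    (G := fun y => Real.exp (∫ s in (0:ℝ)..t, integralSlope (f' s) (X x₀ s) (X y s)))
    (fun y => by rw [flow_sub_flow_eq hf hf' hX y x₀ t ht, hX0, hX0])
    (Real.continuous_exp.continuousAt.comp
      (continuousAt_integral_integralSlope_flow hf hf' hfM hX0 hX x₀ ht))

end Flow

theorem hasDerivAt_of_contDiff_uncurry {g : ℝ → ℝ → ℝ} (hg : ContDiff ℝ 1 (uncurry g))
    (s x : ℝ) : HasDerivAt (g s) (fderiv ℝ (uncurry g) (s, x) (0, 1)) x :=
  ((hg.differentiable one_ne_zero) (s, x)).hasFDerivAt.comp_hasDerivAt x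
    ((hasDerivAt_const x s).prodMk (hasDerivAt_id x))

theorem continuous_uncurry_deriv_of_contDiff_uncurry {g : ℝ → ℝ → ℝ}
    (hg : ContDiff ℝ 1 (uncurry g)) : Continuous (uncurry fun s => deriv (g s)) :=
  ((hg.continuous_fderiv one_ne_zero).clm_apply continuous_const).congr fun p =>
    (hasDerivAt_of_contDiff_uncurry hg p.1 p.2).deriv.symm

theorem intervalIntegrable_uncurry_comp {G : ℝ → ℝ → ℝ} {x : ℝ → ℝ} {a b : ℝ} (hab : a ≤ b)
    (hG : Continuous (uncurry G)) (hx : ContinuousOn x (Icc a b)) :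
    IntervalIntegrable (fun s => G s (x s)) volume a b :=
  (hG.comp_continuousOn (continuousOn_id.prodMk hx)).intervalIntegrable_of_Icc hab

theorem integral_deriv_comp_mul_eq_log_sub_log {v : ℝ → ℝ} {g : ℝ → ℝ → ℝ} {x : ℝ → ℝ} {t : ℝ}
    (ht : 0 ≤ t) (hv : ContDiff ℝ 1 v) (hvpos : ∀ y, 0 < v y) (hg : Continuous (uncurry g))
    (hx : ∀ s ∈ Icc 0 t, HasDerivAt x (v (x s) * g s (x s)) s) :
    ∫ s in (0:ℝ)..t, deriv v (x s) * g s (x s) = Real.log (v (x t)) - Real.log (v (x 0)) := by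
  refine integral_eq_sub_of_hasDerivAt (f := fun s => Real.log (v (x s))) (fun s hs => ?_)
    (intervalIntegrable_uncurry_comp (G := fun s y => deriv v y * g s y) ht
      (((hv.continuous_deriv le_rfl).comp continuous_snd).mul hg) (HasDerivAt.continuousOn hx))
  rw [uIcc_of_le ht] at hs
  exact (((Real.hasDerivAt_log (hvpos _).ne').comp _
    (hv.differentiable one_ne_zero _).hasDerivAt).comp s (hx s hs)).congr_deriv
    (by field_simp [(hvpos (x s)).ne'])

theorem stmt8_general
    (T vlow Cv Clam : ℝ) (hvlow : 0 < vlow)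
    (v : ℝ → ℝ) (hvC1 : ContDiff ℝ 1 v)
    (hv : ∀ y, vlow ≤ v y ∧ v y ≤ Cv)
    (lam : ℝ → ℝ → ℝ) (hlamC1 : ContDiff ℝ 1 (fun p : ℝ × ℝ => lam p.1 p.2))
    (hlamBd : ∀ s a, |lam s a| ≤ Clam)
    (X : ℝ → ℝ → ℝ)
    (hX0 : ∀ x₀, X x₀ 0 = x₀)
    (hXode : ∀ x₀, ∀ t ∈ Icc (0:ℝ) T,
      HasDerivAt (X x₀) (v (X x₀ t) * lam t (X x₀ t)) t) :
    ∀ x₀, ∀ t ∈ Icc (0:ℝ) T,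
      HasDerivAt (fun y => X y t)
        (v (X x₀ t) / v x₀ *
          Real.exp (∫ s in (0:ℝ)..t, deriv (lam s) (X x₀ s) * v (X x₀ s))) x₀ := by
  intro x₀ t ht
  have hvpos : ∀ y, 0 < v y := fun y => hvlow.trans_le (hv y).1
  have hdv_lam : Continuous (uncurry fun s x => deriv v x * lam s x) :=
    ((hvC1.continuous_deriv le_rfl).comp continuous_snd).mul hlamC1.continuous
  have hdlam_v : Continuous (uncurry fun s x => deriv (lam s) x * v x) :=
    (continuous_uncurry_deriv_of_contDiff_uncurry hlamC1).mul (hvC1.continuous.comp continuous_snd)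
  have hflow := hasDerivAt_flow_initial (M := Cv * Clam) (f := fun s x => v x * lam s x)
    (f' := fun s x => deriv v x * lam s x + deriv (lam s) x * v x)
    (fun s x => ((hvC1.differentiable one_ne_zero x).hasDerivAt.mul
      (hasDerivAt_of_contDiff_uncurry hlamC1 s x).differentiableAt.hasDerivAt).congr_deriv
        (by ring))
    (hdv_lam.add hdlam_v)
    (fun s x => by
      rw [abs_mul, abs_of_pos (hvpos x)]
      exact mul_le_mul (hv x).2 (hlamBd s x) (abs_nonneg _) ((hvpos x).le.trans (hv x).2))
    hX0 hXode x₀ t ht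
  have hXc : ContinuousOn (X x₀) (Icc 0 t) :=
    HasDerivAt.continuousOn fun s hs => hXode x₀ s ⟨hs.1, hs.2.trans ht.2⟩
  convert hflow using 1
  rw [integral_add (intervalIntegrable_uncurry_comp ht.1 hdv_lam hXc)
    (intervalIntegrable_uncurry_comp ht.1 hdlam_v hXc),
    integral_deriv_comp_mul_eq_log_sub_log ht.1 hvC1 hvpos hlamC1.continuous
      fun s hs => hXode x₀ s ⟨hs.1, hs.2.trans ht.2⟩,
    Real.exp_add, Real.exp_sub, Real.exp_log (hvpos _), Real.exp_log (hvpos _), hX0]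

/-- For smooth data, the derivative of the flow with respect to the initial
datum is given explicitly by
`∂_{x₀} X(x₀;t) = (v(X(x₀;t))/v(x₀)) · exp(∫_0^t ∂₂λ(s, X(x₀;s)) v(X(x₀;s)) ds)`. -/
theorem stmt8
    (T vlow Cv Clam CdL : ℝ) (hT : 0 < T) (hvlow : 0 < vlow)
    (v : ℝ → ℝ) (hvC1 : ContDiff ℝ 1 v)
    (hv : ∀ y, vlow ≤ v y ∧ v y ≤ Cv)
    (lam : ℝ → ℝ → ℝ) (hlamC1 : ContDiff ℝ 1 (fun p : ℝ × ℝ => lam p.1 p.2))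
    (hlamBd : ∀ s a, |lam s a| ≤ Clam)
    (hdlamBd : ∀ s a, |deriv (lam s) a| ≤ CdL)
    (X : ℝ → ℝ → ℝ)
    (hX0 : ∀ x₀, X x₀ 0 = x₀)
    (hXode : ∀ x₀, ∀ t ∈ Icc (0:ℝ) T,
      HasDerivAt (X x₀) (v (X x₀ t) * lam t (X x₀ t)) t) :
    ∀ x₀, ∀ t ∈ Icc (0:ℝ) T,
      HasDerivAt (fun y => X y t)
        (v (X x₀ t) / v x₀ *
          Real.exp (∫ s in (0:ℝ)..t, deriv (lam s) (X x₀ s) * v (X x₀ s))) x₀ :=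
  stmt8_general T vlow Cv Clam hvlow v hvC1 hv lam hlamC1 hlamBd X hX0 hXode
end

section
/- Under the Osgood-type bound, the autonomous discontinuous ODE x' = v(x) λ̃(x) has a unique Filippov solution, provided λ̃ is globally Lipschitz, v ∈ L^∞ with v ≥ v̲ > 0, and the set of points x where λ̃(x) ≠ 0 and v is discontinuous at x has Lebesgue measure zero. In particular, at any point x with λ̃(x) = 0, the function g(z) := lim_{δ→0} esssup_{y∈B_δ(x)} ((v·λ̃)(y+z) sgn(z))⁺ satisfies g(z) ≤ ‖v‖_∞ ‖λ̃'‖_∞ |z|, hence ∫_{−δ̃}^{0} 1/g(u) du = ∞ = ∫_{0}^{δ̃} 1/g(u) du for all small δ̃ > 0. -/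
/-!
At a zero `x` of the Lipschitz factor, `|λ̃(y + z)| ≤ ‖λ̃'‖_∞ (|z| + δ)` for `y ∈ B_δ(x)`, so every
essential supremum defining `g z` is at most `‖v‖_∞ ‖λ̃'‖_∞ (|z| + δ)`; letting `δ → 0` gives the
linear bound. A function bounded by `C |u|` near `0` has `1/g ≥ 1/(C |u|)`, and `1/u` is not
integrable at `0`, which is the Osgood divergence.
-/

open MeasureTheory Set Filter Topology
open scoped ENNReal

lemma mul_sign_le_abs (a z : ℝ) : a * Real.sign z ≤ |a| := by
  rcases Real.sign_apply_eq z with h | h | h <;> simp [h, le_abs_self, neg_le_abs]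

section LinearBound

variable {v lam : ℝ → ℝ} {C L x z : ℝ}

lemma essSup_restrict_ball_le (hC : 0 ≤ C) (hL : 0 ≤ L) (hv : ∀ᵐ y, |v y| ≤ C)
    (hlam : ∀ y, |lam y| ≤ L * |y - x|) {δ : ℝ} (hδ : 0 < δ) :
    essSup (fun y => max (v (y + z) * lam (y + z) * Real.sign z) 0)
      (volume.restrict (Metric.ball x δ)) ≤ C * L * (|z| + δ) := by
  have : (ae (volume.restrict (Metric.ball x δ))).NeBot := by
    rw [ae_neBot, Ne, Measure.restrict_eq_zero]
    exact (Metric.measure_ball_pos volume x hδ).ne'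
  refine essSup_le_of_ae_le _ ?_ (isCoboundedUnder_le_of_le _ fun _ => le_max_right _ 0)
  have hvz : ∀ᵐ y, |v (y + z)| ≤ C :=
    (measurePreserving_add_right volume z).quasiMeasurePreserving.ae hv
  filter_upwards [ae_restrict_of_ae hvz, ae_restrict_mem measurableSet_ball] with y hvy hy
  refine max_le ?_ (by positivity)
  have hdist : |y + z - x| ≤ |z| + δ := by
    have hyx : |y - x| < δ := hy
    calc |y + z - x| = |z + (y - x)| := by congr 1; ring
      _ ≤ |z| + |y - x| := abs_add_le _ _
      _ ≤ |z| + δ := by linarith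
  calc v (y + z) * lam (y + z) * Real.sign z ≤ |v (y + z) * lam (y + z)| := mul_sign_le_abs _ _
    _ = |v (y + z)| * |lam (y + z)| := abs_mul _ _
    _ ≤ C * (L * (|z| + δ)) :=
      mul_le_mul hvy ((hlam _).trans (mul_le_mul_of_nonneg_left hdist hL)) (abs_nonneg _) hC
    _ = C * L * (|z| + δ) := by ring

lemma le_mul_abs_of_tendsto_essSup_ball (hC : 0 ≤ C) (hL : 0 ≤ L) (hv : ∀ᵐ y, |v y| ≤ C)
    (hlam : ∀ y, |lam y| ≤ L * |y - x|) {gz : ℝ}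
    (hg : Tendsto (fun δ => essSup (fun y => max (v (y + z) * lam (y + z) * Real.sign z) 0)
      (volume.restrict (Metric.ball x δ))) (𝓝[>] 0) (𝓝 gz)) :
    gz ≤ C * L * |z| := by
  have hbound : Tendsto (fun δ : ℝ => C * L * (|z| + δ)) (𝓝[>] 0) (𝓝 (C * L * |z|)) :=
    ((by fun_prop : Continuous fun δ : ℝ => C * L * (|z| + δ)).tendsto' 0 _
      (by simp)).mono_left nhdsWithin_le_nhds
  refine le_of_tendsto_of_tendsto hg hbound ?_
  filter_upwards [self_mem_nhdsWithin] with δ hδ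
  exact essSup_restrict_ball_le hC hL hv hlam hδ

end LinearBound

section Osgood

variable {g : ℝ → ℝ} {C δ : ℝ}

lemma lintegral_Ioc_ofReal_inv_eq_top (hδ : 0 < δ) :
    ∫⁻ u in Ioc 0 δ, ENNReal.ofReal u⁻¹ = ∞ := by
  by_contra h
  have hint : IntegrableOn (·⁻¹) (Ioc 0 δ) :=
    (lintegral_ofReal_ne_top_iff_integrable measurable_inv.aestronglyMeasurable
      (ae_restrict_of_forall_mem measurableSet_Ioc fun u hu => inv_nonneg.2 hu.1.le)).1 h
  have := (intervalIntegrable_iff_integrableOn_Ioc_of_le hδ.le).2 hint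
  simp [hδ.ne] at this

lemma lintegral_Ioc_inv_ofReal_eq_top_of_le_mul (hδ : 0 < δ) (hg : ∀ u ∈ Ioc 0 δ, g u ≤ C * u) :
    ∫⁻ u in Ioc 0 δ, (ENNReal.ofReal (g u))⁻¹ = ∞ := by
  set K := max C 1
  have hK : 0 < K := lt_max_of_lt_right one_pos
  have hle : ∀ u ∈ Ioc 0 δ,
      ENNReal.ofReal K⁻¹ * ENNReal.ofReal u⁻¹ ≤ (ENNReal.ofReal (g u))⁻¹ := by
    intro u hu
    rw [← ENNReal.ofReal_mul (inv_nonneg.2 hK.le), ← mul_inv,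
      ENNReal.ofReal_inv_of_pos (mul_pos hK hu.1)]
    refine ENNReal.inv_le_inv' (ENNReal.ofReal_le_ofReal ?_)
    exact (hg u hu).trans (mul_le_mul_of_nonneg_right (le_max_left _ _) hu.1.le)
  refine top_unique ?_
  calc ∞ = ENNReal.ofReal K⁻¹ * ∫⁻ u in Ioc 0 δ, ENNReal.ofReal u⁻¹ := by
        rw [lintegral_Ioc_ofReal_inv_eq_top hδ, ENNReal.mul_top]
        simpa using hK
    _ = ∫⁻ u in Ioc 0 δ, ENNReal.ofReal K⁻¹ * ENNReal.ofReal u⁻¹ :=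
        (lintegral_const_mul _ (by fun_prop)).symm
    _ ≤ ∫⁻ u in Ioc 0 δ, (ENNReal.ofReal (g u))⁻¹ := setLIntegral_mono' measurableSet_Ioc hle

lemma lintegral_Ico_inv_ofReal_eq_top_of_le_mul (hδ : 0 < δ)
    (hg : ∀ u ∈ Ico (-δ) 0, g u ≤ C * -u) :
    ∫⁻ u in Ico (-δ) 0, (ENNReal.ofReal (g u))⁻¹ = ∞ := by
  have hpre : Neg.neg ⁻¹' Ico (-δ) 0 = Ioc 0 δ := by
    simp [Set.neg_Ico]
  rw [← (Measure.measurePreserving_neg volume).setLIntegral_comp_preimage_emb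
    (Homeomorph.neg ℝ).measurableEmbedding, hpre]
  refine lintegral_Ioc_inv_ofReal_eq_top_of_le_mul (g := fun u => g (-u)) (C := C) hδ fun u hu => ?_
  simpa using hg (-u) ⟨by linarith [hu.2], by linarith [hu.1]⟩

end Osgood

theorem stmt9_general
    (vlow Cv Llam : ℝ) (hvlow : 0 < vlow)
    (v : ℝ → ℝ)
    (hv : ∀ᵐ y : ℝ, vlow ≤ v y ∧ v y ≤ Cv)
    (lamt : ℝ → ℝ)
    (hlamLip : ∀ a b, |lamt a - lamt b| ≤ Llam * |a - b|)
    (x : ℝ) (hx0 : lamt x = 0)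
    (g : ℝ → ℝ)
    (hgdef : ∀ z, Tendsto
      (fun δ => essSup (fun y => max ((v (y + z) * lamt (y + z)) * Real.sign z) 0)
        (volume.restrict (Metric.ball x δ)))
      (nhdsWithin 0 (Ioi 0)) (nhds (g z))) :
    (∀ z : ℝ, g z ≤ Cv * Llam * |z|) ∧
    (∀ δt : ℝ, 0 < δt →
      (∫⁻ u in Ioc (0:ℝ) δt, (ENNReal.ofReal (g u))⁻¹) = ⊤ ∧
      (∫⁻ u in Ico (-δt) (0:ℝ), (ENNReal.ofReal (g u))⁻¹) = ⊤) := by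
  have hvabs : ∀ᵐ y, |v y| ≤ Cv := hv.mono fun y hy => abs_le.2 ⟨by linarith [hy.1], hy.2⟩
  have hCv : 0 ≤ Cv := by
    obtain ⟨y, hy⟩ := hv.exists
    linarith [hy.1, hy.2]
  have hLlam : 0 ≤ Llam := by
    simpa using (abs_nonneg _).trans (hlamLip (x + 1) x)
  have hlam : ∀ y, |lamt y| ≤ Llam * |y - x| := fun y => by simpa [hx0] using hlamLip y x
  have hlin : ∀ z, g z ≤ Cv * Llam * |z| := fun z =>
    le_mul_abs_of_tendsto_essSup_ball hCv hLlam hvabs hlam (hgdef z)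
  refine ⟨hlin, fun δt hδt => ⟨?_, ?_⟩⟩
  · exact lintegral_Ioc_inv_ofReal_eq_top_of_le_mul hδt fun u hu => by
      simpa [abs_of_pos hu.1] using hlin u
  · exact lintegral_Ico_inv_ofReal_eq_top_of_le_mul hδt fun u hu => by
      simpa [abs_of_neg hu.2] using hlin u

/-- Osgood bound at zeros of the Lipschitz part, the formalizable content of
uniqueness of Filippov solutions for the autonomous discontinuous ODE `x' = v(x)λ̃(x)`:
at a point `x` with `λ̃(x) = 0`, the function
`g(z) = lim_{δ→0⁺} esssup_{y ∈ B_δ(x)} ((v·λ̃)(y+z) sgn z)⁺`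
satisfies `g(z) ≤ ‖v‖_∞ ‖λ̃'‖_∞ |z|`, and hence the Osgood divergence
`∫_{−δ̃}^0 1/g = ∞ = ∫_0^{δ̃} 1/g` holds for every `δ̃ > 0`. -/
theorem stmt9
    (vlow Cv Llam : ℝ) (hvlow : 0 < vlow)
    (v : ℝ → ℝ) (hmeas : Measurable v)
    (hv : ∀ᵐ y : ℝ, vlow ≤ v y ∧ v y ≤ Cv)
    (lamt : ℝ → ℝ)
    (hlamLip : ∀ a b, |lamt a - lamt b| ≤ Llam * |a - b|)
    (x : ℝ) (hx0 : lamt x = 0)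
    (g : ℝ → ℝ) (hgnn : ∀ z, 0 ≤ g z)
    (hgdef : ∀ z, Tendsto
      (fun δ => essSup (fun y => max ((v (y + z) * lamt (y + z)) * Real.sign z) 0)
        (volume.restrict (Metric.ball x δ)))
      (nhdsWithin 0 (Ioi 0)) (nhds (g z))) :
    (∀ z : ℝ, g z ≤ Cv * Llam * |z|) ∧
    (∀ δt : ℝ, 0 < δt →
      (∫⁻ u in Ioc (0:ℝ) δt, (ENNReal.ofReal (g u))⁻¹) = ⊤ ∧
      (∫⁻ u in Ico (-δt) (0:ℝ), (ENNReal.ofReal (g u))⁻¹) = ⊤) :=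
  stmt9_general vlow Cv Llam hvlow v hv lamt hlamLip x hx0 g hgdef
end

section
/- Convergence of compositions in L¹_loc: let f_ε → f in L¹_loc(ℝ), g_ε → g uniformly on ℝ, where each g_ε ∈ W^{1,∞}_loc(ℝ) satisfies g_ε' ≥ C > 0 a.e. for a constant C independent of ε. Then f_ε ∘ g_ε → f ∘ g in L¹_loc(ℝ). -/
/-!
A map `φ` with slope at least `C > 0` has a `C⁻¹`-Lipschitz inverse, so `φ`-preimages have at most
`C⁻¹` times the measure of the set: `∫_I u ∘ φ ≤ C⁻¹ ∫_J u` whenever `φ` maps `I` into `J`. With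
`I = (a, b)` and `J = (g a - 1, g b + 1)`, which contains `G ε (I)` for small `ε`, this bounds
`F ε ∘ G ε - f ∘ G ε` in `L¹(I)` by `C⁻¹ ‖F ε - f‖_{L¹(J)}`. For `f ∘ G ε - f ∘ g`, approximate `f`
in `L¹(J)` by a continuous compactly supported `h`: the errors `(f - h) ∘ G ε` and `(f - h) ∘ g` are
small by the same bound, and `h ∘ G ε → h ∘ g` uniformly since `h` is uniformly continuous.
-/

open MeasureTheory Set Filter Topology
open scoped ENNReal

def HasSlopeAtLeast (C : ℝ) (φ : ℝ → ℝ) : Prop :=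
  ∀ x y : ℝ, x ≤ y → C * (y - x) ≤ φ y - φ x

namespace HasSlopeAtLeast

variable {C : ℝ} {φ : ℝ → ℝ}

theorem monotone (hC : 0 ≤ C) (hφ : HasSlopeAtLeast C φ) : Monotone φ :=
  fun x y hxy => sub_nonneg.1 ((mul_nonneg hC (sub_nonneg.2 hxy)).trans (hφ x y hxy))

theorem mul_dist_le (hC : 0 ≤ C) (hφ : HasSlopeAtLeast C φ) (x y : ℝ) :
    C * dist x y ≤ dist (φ x) (φ y) := by
  wlog hxy : x ≤ y generalizing x y
  · rw [dist_comm x, dist_comm (φ x)]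
    exact this y x (le_of_not_ge hxy)
  rw [dist_comm x, dist_comm (φ x), Real.dist_eq, Real.dist_eq, abs_of_nonneg (sub_nonneg.2 hxy),
    abs_of_nonneg (sub_nonneg.2 (hφ.monotone hC hxy))]
  exact hφ x y hxy

theorem antilipschitzWith (hC : 0 < C) (hφ : HasSlopeAtLeast C φ) :
    AntilipschitzWith (Real.toNNReal C)⁻¹ φ :=
  .of_le_mul_dist fun x y => by
    rw [NNReal.coe_inv, Real.coe_toNNReal _ hC.le, le_inv_mul_iff₀ hC]
    exact hφ.mul_dist_le hC.le x y

theorem volume_preimage_le (hC : 0 < C) (hφ : HasSlopeAtLeast C φ) (s : Set ℝ) :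
    volume (φ ⁻¹' s) ≤ (ENNReal.ofReal C)⁻¹ * volume s := by
  simpa [hausdorffMeasure_real, ENNReal.coe_inv, hC, ENNReal.ofReal] using
    (hφ.antilipschitzWith hC).hausdorffMeasure_preimage_le zero_le_one s

theorem map_restrict_le (hC : 0 < C) (hφ : HasSlopeAtLeast C φ) {s t : Set ℝ}
    (ht : MeasurableSet t) (hst : MapsTo φ s t) :
    (volume.restrict s).map φ ≤ (ENNReal.ofReal C)⁻¹ • volume.restrict t := by
  have hφm : Measurable φ := (hφ.monotone hC.le).measurable
  have hmap : volume.map φ ≤ (ENNReal.ofReal C)⁻¹ • volume := Measure.le_iff.2 fun u hu => by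
    rw [Measure.map_apply hφm hu]
    exact hφ.volume_preimage_le hC u
  calc (volume.restrict s).map φ ≤ (volume.restrict (φ ⁻¹' t)).map φ :=
        Measure.map_mono (Measure.restrict_mono hst le_rfl) hφm
    _ = (volume.map φ).restrict t := (Measure.restrict_map hφm ht).symm
    _ ≤ ((ENNReal.ofReal C)⁻¹ • volume).restrict t := Measure.restrict_mono le_rfl hmap
    _ = (ENNReal.ofReal C)⁻¹ • volume.restrict t := Measure.restrict_smul _ _ _

theorem quasiMeasurePreserving (hC : 0 < C) (hφ : HasSlopeAtLeast C φ) :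
    Measure.QuasiMeasurePreserving φ volume volume where
  measurable := (hφ.monotone hC.le).measurable
  absolutelyContinuous := Measure.absolutelyContinuous_of_le_smul <| by
    simpa using hφ.map_restrict_le hC MeasurableSet.univ (mapsTo_univ φ univ)

theorem aestronglyMeasurable_comp {E : Type*} [TopologicalSpace E] (hC : 0 < C)
    (hφ : HasSlopeAtLeast C φ) {u : ℝ → E} (hu : AEStronglyMeasurable u volume) :
    AEStronglyMeasurable (fun x => u (φ x)) volume :=
  hu.comp_quasiMeasurePreserving (hφ.quasiMeasurePreserving hC)

theorem setLIntegral_comp_le (hC : 0 < C) (hφ : HasSlopeAtLeast C φ) {s t : Set ℝ}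
    (ht : MeasurableSet t) (hst : MapsTo φ s t) {k : ℝ → ℝ≥0∞}
    (hk : AEMeasurable k (volume.restrict t)) :
    ∫⁻ x in s, k (φ x) ≤ (ENNReal.ofReal C)⁻¹ * ∫⁻ y in t, k y := by
  have hle := hφ.map_restrict_le hC ht hst
  rw [← lintegral_map' ((hk.smul_measure _).mono_measure hle)
    (hφ.monotone hC.le).measurable.aemeasurable, ← smul_eq_mul, ← lintegral_smul_measure]
  exact lintegral_mono' hle le_rfl

end HasSlopeAtLeast

theorem TendstoUniformly.tendsto_setLIntegral_edist {α β ι : Type*} [MeasurableSpace α]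
    [PseudoEMetricSpace β] {μ : Measure α} {l : Filter ι} {u : ι → α → β} {v : α → β}
    (h : TendstoUniformly u v l) {s : Set α} (hs : μ s ≠ ∞) :
    Tendsto (fun i => ∫⁻ x in s, edist (v x) (u i x) ∂μ) l (𝓝 0) := by
  refine ENNReal.tendsto_nhds_zero.2 fun δ hδ => ?_
  filter_upwards [EMetric.tendstoUniformly_iff.1 h (δ / μ s) (ENNReal.div_pos hδ.ne' hs)]
    with i hi
  calc ∫⁻ x in s, edist (v x) (u i x) ∂μ ≤ ∫⁻ _ in s, δ / μ s ∂μ :=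
        lintegral_mono fun x => (hi x).le
    _ = μ s * (δ / μ s) := by rw [setLIntegral_const, mul_comm]
    _ ≤ δ := ENNReal.mul_div_le

theorem Monotone.eventually_mapsTo_Ioo {ι : Type*} {l : Filter ι} {g : ℝ → ℝ} {G : ι → ℝ → ℝ}
    (hg : Monotone g) (hGg : TendstoUniformly G g l) (a b : ℝ) :
    ∀ᶠ i in l, MapsTo (G i) (Ioo a b) (Ioo (g a - 1) (g b + 1)) := by
  filter_upwards [Metric.tendstoUniformly_iff.1 hGg 1 one_pos] with i hi x hx
  have := abs_lt.1 (Real.dist_eq _ _ ▸ hi x)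
  constructor <;> linarith [hg hx.1.le, hg hx.2.le]

theorem tendsto_setLIntegral_comp_of_hasSlopeAtLeast {ι : Type*} {l : Filter ι} {C : ℝ}
    (hC : 0 < C) {G : ι → ℝ → ℝ} {k : ι → ℝ → ℝ≥0∞} {s t : Set ℝ} (ht : MeasurableSet t)
    (hk : ∀ᶠ i in l, AEMeasurable (k i) (volume.restrict t))
    (hG : ∀ᶠ i in l, HasSlopeAtLeast C (G i)) (hGst : ∀ᶠ i in l, MapsTo (G i) s t)
    (hlim : Tendsto (fun i => ∫⁻ y in t, k i y) l (𝓝 0)) :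
    Tendsto (fun i => ∫⁻ x in s, k i (G i x)) l (𝓝 0) := by
  have hlim' := ENNReal.Tendsto.const_mul (a := (ENNReal.ofReal C)⁻¹) hlim
    (.inr (ENNReal.inv_ne_top.2 (by simpa using hC)))
  rw [mul_zero] at hlim'
  refine tendsto_of_tendsto_of_tendsto_of_le_of_le' tendsto_const_nhds hlim'
    (.of_forall fun _ => zero_le) ?_
  filter_upwards [hk, hG, hGst] with i hki hGi hGsti
  exact hGi.setLIntegral_comp_le hC ht hGsti hki

theorem MeasureTheory.LocallyIntegrable.integrableOn_Ioo {E : Type*} [NormedAddCommGroup E]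
    {μ : Measure ℝ} {f : ℝ → E} (hf : LocallyIntegrable f μ) (a b : ℝ) :
    IntegrableOn f (Ioo a b) μ :=
  (hf.integrableOn_isCompact isCompact_Icc).mono_set Ioo_subset_Icc_self

section L1Distance

variable {α ι E : Type*} [MeasurableSpace α] [NormedAddCommGroup E] {μ : Measure α}
  {l : Filter ι} {u : ι → α → E} {v : α → E}

theorem tendsto_lintegral_edist_of_tendsto_integral_norm
    (hint : ∀ᶠ i in l, Integrable (fun x => u i x - v x) μ)
    (hlim : Tendsto (fun i => ∫ x, ‖u i x - v x‖ ∂μ) l (𝓝 0)) :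
    Tendsto (fun i => ∫⁻ x, edist (u i x) (v x) ∂μ) l (𝓝 0) := by
  rw [← ENNReal.ofReal_zero]
  refine ((ENNReal.continuous_ofReal.tendsto 0).comp hlim).congr' ?_
  filter_upwards [hint] with i hi
  simpa [edist_eq_enorm_sub] using ofReal_integral_norm_eq_lintegral_enorm hi

theorem tendsto_integral_norm_of_tendsto_lintegral_edist
    (hmeas : ∀ᶠ i in l, AEStronglyMeasurable (fun x => u i x - v x) μ)
    (hlim : Tendsto (fun i => ∫⁻ x, edist (u i x) (v x) ∂μ) l (𝓝 0)) :
    Tendsto (fun i => ∫ x, ‖u i x - v x‖ ∂μ) l (𝓝 0) := by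
  rw [← ENNReal.toReal_zero]
  refine ((ENNReal.tendsto_toReal ENNReal.zero_ne_top).comp hlim).congr' ?_
  filter_upwards [hmeas] with i hi
  simpa [edist_eq_enorm_sub] using (integral_norm_eq_lintegral_enorm hi).symm

end L1Distance

theorem exists_continuous_forall_setLIntegral_edist_comp_le {C : ℝ} (hC : 0 < C) {f : ℝ → ℝ}
    {J : Set ℝ} (hJ : MeasurableSet J) (hf : IntegrableOn f J) {δ : ℝ≥0∞} (hδ : δ ≠ 0) :
    ∃ h : ℝ → ℝ, HasCompactSupport h ∧ Continuous h ∧ ∀ {I : Set ℝ} {φ : ℝ → ℝ},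
      HasSlopeAtLeast C φ → MapsTo φ I J → ∫⁻ x in I, edist (f (φ x)) (h (φ x)) ≤ δ := by
  have hCδ : ENNReal.ofReal C * δ ≠ 0 := by simp [hC, hδ]
  obtain ⟨h, h_supp, hfh, h_cont, -⟩ :=
    (memLp_one_iff_integrable.2 hf).exists_hasCompactSupport_eLpNorm_sub_le ENNReal.one_ne_top hCδ
  refine ⟨h, h_supp, h_cont, fun {I φ} hφ hIJ => ?_⟩
  calc ∫⁻ x in I, edist (f (φ x)) (h (φ x))
      ≤ (ENNReal.ofReal C)⁻¹ * ∫⁻ y in J, edist (f y) (h y) :=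
        hφ.setLIntegral_comp_le hC hJ hIJ
          (hf.aestronglyMeasurable.edist h_cont.aestronglyMeasurable)
    _ ≤ (ENNReal.ofReal C)⁻¹ * (ENNReal.ofReal C * δ) := by
        gcongr
        simpa [eLpNorm_one_eq_lintegral_enorm, edist_eq_enorm_sub] using hfh
    _ = δ := ENNReal.inv_mul_cancel_left (by simp [hC]) ENNReal.ofReal_ne_top

theorem tendsto_setLIntegral_edist_comp_of_tendstoUniformly {ι : Type*} {l : Filter ι} {C : ℝ}
    (hC : 0 < C) {f g : ℝ → ℝ} {G : ι → ℝ → ℝ} (hf : LocallyIntegrable f)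
    (hG : ∀ᶠ i in l, HasSlopeAtLeast C (G i)) (hg : HasSlopeAtLeast C g)
    (hGg : TendstoUniformly G g l) (a b : ℝ) :
    Tendsto (fun i => ∫⁻ x in Ioo a b, edist (f (g x)) (f (G i x))) l (𝓝 0) := by
  refine ENNReal.tendsto_nhds_zero.2 fun δ hδ => ?_
  have hδ3 : δ / 3 ≠ 0 := by simp [hδ.ne']
  obtain ⟨h, h_supp, h_cont, happrox⟩ := exists_continuous_forall_setLIntegral_edist_comp_le hC
    measurableSet_Ioo (hf.integrableOn_Ioo (g a - 1) (g b + 1)) hδ3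
  have hmid := ((h_supp.uniformContinuous_of_continuous h_cont).comp_tendstoUniformly
    hGg).tendsto_setLIntegral_edist (μ := volume) (s := Ioo a b) (by simp)
  have hgJ : MapsTo g (Ioo a b) (Ioo (g a - 1) (g b + 1)) := fun x hx =>
    ⟨by linarith [hg.monotone hC.le hx.1.le], by linarith [hg.monotone hC.le hx.2.le]⟩
  filter_upwards [hG, (hg.monotone hC.le).eventually_mapsTo_Ioo hGg a b,
    ENNReal.tendsto_nhds_zero.1 hmid (δ / 3) (pos_iff_ne_zero.2 hδ3)] with i hGi hGiJ hi
  have hmeas : ∀ {φ : ℝ → ℝ}, HasSlopeAtLeast C φ →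
      AEStronglyMeasurable (fun x => f (φ x)) volume ∧
        AEStronglyMeasurable (fun x => h (φ x)) volume := fun hφ =>
    ⟨hφ.aestronglyMeasurable_comp hC hf.aestronglyMeasurable,
      hφ.aestronglyMeasurable_comp hC h_cont.aestronglyMeasurable⟩
  calc ∫⁻ x in Ioo a b, edist (f (g x)) (f (G i x))
      ≤ (∫⁻ x in Ioo a b, edist (f (g x)) (h (g x)))
          + ∫⁻ x in Ioo a b, edist (f (G i x)) (h (g x)) :=
        lintegral_edist_triangle (hmeas hg).1.restrict (hmeas hg).2.restrict
    _ ≤ (∫⁻ x in Ioo a b, edist (f (g x)) (h (g x)))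
          + ((∫⁻ x in Ioo a b, edist (f (G i x)) (h (G i x)))
            + ∫⁻ x in Ioo a b, edist (h (g x)) (h (G i x))) :=
        add_le_add le_rfl
          (lintegral_edist_triangle (hmeas hGi).1.restrict (hmeas hGi).2.restrict)
    _ ≤ δ / 3 + (δ / 3 + δ / 3) := by
        gcongr
        exacts [happrox hg hgJ, happrox hGi hGiJ, hi]
    _ = δ := by rw [← add_assoc, ENNReal.add_thirds]

theorem stmt11_general
    (C : ℝ) (hC : 0 < C)
    (f g : ℝ → ℝ) (F G : ℝ → ℝ → ℝ)
    (hfloc : LocallyIntegrable f volume)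
    (hFloc : ∀ ε : ℝ, 0 < ε → LocallyIntegrable (F ε) volume)
    (hGlow : ∀ ε : ℝ, 0 < ε → ∀ x y : ℝ, x ≤ y → C * (y - x) ≤ G ε y - G ε x)
    (hglow : ∀ x y : ℝ, x ≤ y → C * (y - x) ≤ g y - g x)
    (hfconv : ∀ a b : ℝ, Tendsto (fun ε => ∫ x in Ioo a b, |F ε x - f x|)
      (nhdsWithin 0 (Ioi 0)) (nhds 0))
    (hgconv : TendstoUniformly G g (nhdsWithin 0 (Ioi 0))) :
    ∀ a b : ℝ, Tendsto (fun ε => ∫ x in Ioo a b, |F ε (G ε x) - f (g x)|)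
      (nhdsWithin 0 (Ioi 0)) (nhds 0) := by
  intro a b
  have hg : HasSlopeAtLeast C g := hglow
  have hF : ∀ᶠ ε in 𝓝[>] 0, LocallyIntegrable (F ε) := eventually_mem_nhdsWithin.mono hFloc
  have hG : ∀ᶠ ε in 𝓝[>] 0, HasSlopeAtLeast C (G ε) := eventually_mem_nhdsWithin.mono hGlow
  have hcomp : ∀ {u φ : ℝ → ℝ}, LocallyIntegrable u → HasSlopeAtLeast C φ →
      AEStronglyMeasurable (fun x => u (φ x)) volume := fun hu hφ =>
    hφ.aestronglyMeasurable_comp hC hu.aestronglyMeasurable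
  have hFJ := tendsto_lintegral_edist_of_tendsto_integral_norm
    (hF.mono fun ε hFε => (hFε.integrableOn_Ioo _ _).sub (hfloc.integrableOn_Ioo _ _))
    (by simpa only [Real.norm_eq_abs] using hfconv (g a - 1) (g b + 1))
  have hFf := tendsto_setLIntegral_comp_of_hasSlopeAtLeast hC measurableSet_Ioo
    (hF.mono fun ε hFε =>
      hFε.aestronglyMeasurable.restrict.edist hfloc.aestronglyMeasurable.restrict)
    hG ((hg.monotone hC.le).eventually_mapsTo_Ioo hgconv a b) hFJ
  have hff := tendsto_setLIntegral_edist_comp_of_tendstoUniformly hC hfloc hG hg hgconv a b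
  have hsum : Tendsto (fun ε => ∫⁻ x in Ioo a b, edist (F ε (G ε x)) (f (g x)))
      (𝓝[>] 0) (𝓝 0) := by
    refine tendsto_of_tendsto_of_tendsto_of_le_of_le' tendsto_const_nhds
      (by simpa using hFf.add hff) (.of_forall fun _ => zero_le) ?_
    filter_upwards [hF, hG] with ε hFε hGε
    exact lintegral_edist_triangle (hcomp hFε hGε).restrict (hcomp hfloc hGε).restrict
  simpa only [Real.norm_eq_abs] using tendsto_integral_norm_of_tendsto_lintegral_edist
    ((hF.and hG).mono fun ε ⟨hFε, hGε⟩ => ((hcomp hFε hGε).sub (hcomp hfloc hg)).restrict) hsum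

/-- Convergence of compositions in `L¹_loc`: if `f_ε → f` in `L¹_loc(ℝ)`,
`g_ε → g` uniformly on `ℝ`, and each `g_ε` is locally Lipschitz with increments bounded
below by `C(y−x)` for a uniform `C > 0`, then `f_ε ∘ g_ε → f ∘ g` in `L¹_loc(ℝ)`. -/
theorem stmt11
    (C : ℝ) (hC : 0 < C)
    (f g : ℝ → ℝ) (F G : ℝ → ℝ → ℝ)
    (hfmeas : Measurable f) (hFmeas : ∀ ε, Measurable (F ε))
    (hfloc : LocallyIntegrable f volume)
    (hFloc : ∀ ε : ℝ, 0 < ε → LocallyIntegrable (F ε) volume)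
    (hGlip : ∀ ε : ℝ, 0 < ε → LocallyLipschitz (G ε))
    (hglip : LocallyLipschitz g)
    (hGlow : ∀ ε : ℝ, 0 < ε → ∀ x y : ℝ, x ≤ y → C * (y - x) ≤ G ε y - G ε x)
    (hglow : ∀ x y : ℝ, x ≤ y → C * (y - x) ≤ g y - g x)
    (hfconv : ∀ a b : ℝ, Tendsto (fun ε => ∫ x in Ioo a b, |F ε x - f x|)
      (nhdsWithin 0 (Ioi 0)) (nhds 0))
    (hgconv : TendstoUniformly G g (nhdsWithin 0 (Ioi 0))) :
    ∀ a b : ℝ, Tendsto (fun ε => ∫ x in Ioo a b, |F ε (G ε x) - f (g x)|)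
      (nhdsWithin 0 (Ioi 0)) (nhds 0) :=
  stmt11_general C hC f g F G hfloc hFloc hGlow hglow hfconv hgconv
end

section
/- For f ∈ TV(ℝ) ∩ L^∞(ℝ) and g, h bi-Lipschitz increasing diffeomorphisms of ℝ, ‖f∘g − f∘h‖_{L¹(ℝ)} ≤ |f|_{TV(ℝ)} ‖g^{-1} − h^{-1}‖_{L^∞(ℝ)}. -/
/-!
The cumulative variation `v x = Var(f, (-∞, x])` is monotone with values in `[0, |f|_TV]` and
satisfies `|f a - f b| ≤ |v a - v b|`, so it suffices to treat a monotone `φ` with range in an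
interval `[m, M]`. By the layer-cake formula `∫ |φ ∘ g - φ ∘ h| = ∫ |g⁻¹ U_t ∆ h⁻¹ U_t| dt` with
`U_t = {φ ≥ t}`. Each `U_t` is an upper set, so `g⁻¹ U_t` and `h⁻¹ U_t` are nested, and two
points of their difference are at most `sup |g⁻¹ - h⁻¹|` apart; the difference is empty unless
`t ∈ (m, M]`.
-/

open MeasureTheory Set Function
open scoped NNReal symmDiff

theorem Set.Iic_symmDiff_Iic {α : Type*} [LinearOrder α] (a b : α) :
    Iic a ∆ Iic b = Ioc (min a b) (max a b) := by
  ext x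
  simp only [mem_symmDiff, mem_Iic, mem_Ioc, min_lt_iff, le_max_iff]
  grind

theorem Real.volume_Iic_symmDiff_Iic (a b : ℝ) :
    volume (Iic a ∆ Iic b) = ENNReal.ofReal |a - b| := by
  rw [Iic_symmDiff_Iic, Real.volume_Ioc, max_sub_min_eq_abs']

theorem lintegral_ofReal_abs_sub_eq_lintegral_measure_symmDiff {α : Type*} [MeasurableSpace α]
    (μ : Measure α) [SFinite μ] {u w : α → ℝ} (hu : Measurable u) (hw : Measurable w) :
    ∫⁻ x, ENNReal.ofReal |u x - w x| ∂μ = ∫⁻ t, μ ({x | t ≤ u x} ∆ {x | t ≤ w x}) := by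
  have hS : MeasurableSet ({p : α × ℝ | p.2 ≤ u p.1} ∆ {p | p.2 ≤ w p.1}) :=
    (measurableSet_le measurable_snd (hu.comp measurable_fst)).symmDiff
      (measurableSet_le measurable_snd (hw.comp measurable_fst))
  calc ∫⁻ x, ENNReal.ofReal |u x - w x| ∂μ
      = ∫⁻ x, volume (Iic (u x) ∆ Iic (w x)) ∂μ := by
        simp only [Real.volume_Iic_symmDiff_Iic]
    _ = μ.prod volume ({p : α × ℝ | p.2 ≤ u p.1} ∆ {p | p.2 ≤ w p.1}) :=
        (Measure.prod_apply hS).symm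
    _ = ∫⁻ t, μ ({x | t ≤ u x} ∆ {x | t ≤ w x}) := Measure.prod_apply_symm hS

theorem IsUpperSet.volume_preimage_diff_preimage_le {U : Set ℝ} (hU : IsUpperSet U)
    (e₁ e₂ : ℝ ≃o ℝ) {C : ℝ} (hC : ∀ y, e₂.symm y - e₁.symm y ≤ C) :
    volume (e₁ ⁻¹' U \ e₂ ⁻¹' U) ≤ ENNReal.ofReal C := by
  have hgap : ∀ x ∈ e₁ ⁻¹' U \ e₂ ⁻¹' U, ∀ x' ∈ e₁ ⁻¹' U \ e₂ ⁻¹' U, x ≤ x' → x' - x ≤ C := by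
    rintro x ⟨hx, -⟩ x' ⟨-, hx'⟩ -
    have hlt : x' < e₂.symm (e₁ x) := e₂.lt_symm_apply.2 (lt_of_not_ge fun h => hx' (hU h hx))
    have hCx := hC (e₁ x)
    rw [e₁.symm_apply_apply] at hCx
    linarith
  refine (Real.volume_le_diam _).trans (Metric.ediam_le fun x hx x' hx' => ?_)
  rw [edist_dist, Real.dist_eq]
  refine ENNReal.ofReal_le_ofReal ?_
  rcases le_total x x' with h | h
  · rw [abs_sub_comm, abs_of_nonneg (sub_nonneg.2 h)]; exact hgap x hx x' hx' h
  · rw [abs_of_nonneg (sub_nonneg.2 h)]; exact hgap x' hx' x hx h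

theorem IsUpperSet.volume_preimage_symmDiff_preimage_le {U : Set ℝ} (hU : IsUpperSet U)
    (e₁ e₂ : ℝ ≃o ℝ) {C : ℝ} (hC : ∀ y, |e₁.symm y - e₂.symm y| ≤ C) :
    volume ((e₁ ⁻¹' U) ∆ (e₂ ⁻¹' U)) ≤ ENNReal.ofReal C := by
  rcases (hU.preimage e₁.monotone).total (hU.preimage e₂.monotone) with h | h
  · rw [symmDiff_of_le h]
    exact hU.volume_preimage_diff_preimage_le e₂ e₁ fun y => (abs_sub_le_iff.1 (hC y)).1
  · rw [symmDiff_of_ge h]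
    exact hU.volume_preimage_diff_preimage_le e₁ e₂ fun y => (abs_sub_le_iff.1 (hC y)).2

theorem Monotone.lintegral_ofReal_abs_comp_sub_comp_le {φ : ℝ → ℝ} (hφ : Monotone φ) {m M : ℝ}
    (hφm : ∀ y, φ y ∈ Icc m M) (e₁ e₂ : ℝ ≃o ℝ) {C : ℝ} (hC : ∀ y, |e₁.symm y - e₂.symm y| ≤ C) :
    ∫⁻ x, ENNReal.ofReal |φ (e₁ x) - φ (e₂ x)| ≤ ENNReal.ofReal (M - m) * ENNReal.ofReal C := by
  have slice_le : ∀ t, volume ({x | t ≤ φ (e₁ x)} ∆ {x | t ≤ φ (e₂ x)}) ≤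
      (Ioc m M).indicator (fun _ => ENNReal.ofReal C) t := by
    intro t
    by_cases ht : t ∈ Ioc m M
    · rw [indicator_of_mem ht]
      exact (isUpperSet_Ici t |>.preimage hφ).volume_preimage_symmDiff_preimage_le e₁ e₂ hC
    · have hconst : ∀ y y', t ≤ φ y → t ≤ φ y' := fun y y' hy => by
        by_contra hy'
        exact ht ⟨(hφm y').1.trans_lt (not_le.1 hy'), hy.trans (hφm y).2⟩
      have hempty : {x | t ≤ φ (e₁ x)} ∆ {x | t ≤ φ (e₂ x)} = ∅ := by
        ext x
        simp only [mem_symmDiff, mem_ofPred_eq, mem_empty_iff_false, iff_false]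
        rintro (⟨h₁, h₂⟩ | ⟨h₁, h₂⟩) <;> exact h₂ (hconst _ _ h₁)
      rw [hempty, measure_empty]
      exact zero_le
  calc ∫⁻ x, ENNReal.ofReal |φ (e₁ x) - φ (e₂ x)|
      = ∫⁻ t, volume ({x | t ≤ φ (e₁ x)} ∆ {x | t ≤ φ (e₂ x)}) :=
        lintegral_ofReal_abs_sub_eq_lintegral_measure_symmDiff volume
          (hφ.comp e₁.monotone).measurable (hφ.comp e₂.monotone).measurable
    _ ≤ ∫⁻ t, (Ioc m M).indicator (fun _ => ENNReal.ofReal C) t := lintegral_mono slice_le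
    _ = ENNReal.ofReal (M - m) * ENNReal.ofReal C := by
        rw [lintegral_indicator_const measurableSet_Ioc, Real.volume_Ioc, mul_comm]

section Variation

variable {α E : Type*} [LinearOrder α]

theorem eVariationOn_Iic_add_Icc [PseudoEMetricSpace E] (f : α → E) {a b : α} (hab : a ≤ b) :
    eVariationOn f (Iic a) + eVariationOn f (Icc a b) = eVariationOn f (Iic b) := by
  rw [← eVariationOn.union f isGreatest_Iic (isLeast_Icc hab), Iic_union_Icc_eq_Iic hab]

theorem BoundedVariationOn.dist_le_abs_variation_Iic_sub [PseudoMetricSpace E] {f : α → E}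
    (hf : BoundedVariationOn f univ) (a b : α) :
    dist (f a) (f b) ≤ |(eVariationOn f (Iic a)).toReal - (eVariationOn f (Iic b)).toReal| := by
  wlog hab : a ≤ b generalizing a b
  · rw [dist_comm, abs_sub_comm]
    exact this b a (le_of_not_ge hab)
  have hfin : ∀ s, eVariationOn f s ≠ ⊤ := fun s => hf.mono (subset_univ s)
  rw [← eVariationOn_Iic_add_Icc f hab, ENNReal.toReal_add (hfin _) (hfin _), abs_sub_comm,
    add_sub_cancel_left]
  calc dist (f a) (f b) ≤ (eVariationOn f (Icc a b)).toReal :=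
        (hf.mono (subset_univ _)).dist_le (left_mem_Icc.2 hab) (right_mem_Icc.2 hab)
    _ ≤ |(eVariationOn f (Icc a b)).toReal| := le_abs_self _

end Variation

theorem BoundedVariationOn.measurable {f : ℝ → ℝ} (hf : BoundedVariationOn f univ) :
    Measurable f := by
  obtain ⟨p, q, hp, hq, rfl⟩ := hf.locallyBoundedVariationOn.exists_monotoneOn_sub_monotoneOn
  exact (monotoneOn_univ.1 hp).measurable.sub (monotoneOn_univ.1 hq).measurable

theorem BoundedVariationOn.lintegral_ofReal_abs_comp_sub_comp_le {f : ℝ → ℝ}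
    (hf : BoundedVariationOn f univ) (e₁ e₂ : ℝ ≃o ℝ) {C : ℝ}
    (hC : ∀ y, |e₁.symm y - e₂.symm y| ≤ C) :
    ∫⁻ x, ENNReal.ofReal |f (e₁ x) - f (e₂ x)| ≤
      ENNReal.ofReal (eVariationOn f univ).toReal * ENNReal.ofReal C := by
  set v : ℝ → ℝ := fun x => (eVariationOn f (Iic x)).toReal
  have hv : Monotone v := fun a b hab =>
    ENNReal.toReal_mono (hf.mono (subset_univ _)) (eVariationOn.mono f (Iic_subset_Iic.2 hab))
  have hv_mem : ∀ y, v y ∈ Icc 0 (eVariationOn f univ).toReal := fun y =>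
    ⟨ENNReal.toReal_nonneg, ENNReal.toReal_mono hf (eVariationOn.mono f (subset_univ _))⟩
  calc ∫⁻ x, ENNReal.ofReal |f (e₁ x) - f (e₂ x)|
      ≤ ∫⁻ x, ENNReal.ofReal |v (e₁ x) - v (e₂ x)| := lintegral_mono fun x =>
        ENNReal.ofReal_le_ofReal (Real.dist_eq _ _ ▸ hf.dist_le_abs_variation_Iic_sub _ _)
    _ ≤ ENNReal.ofReal ((eVariationOn f univ).toReal - 0) * ENNReal.ofReal C :=
        hv.lintegral_ofReal_abs_comp_sub_comp_le hv_mem e₁ e₂ hC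
    _ = ENNReal.ofReal (eVariationOn f univ).toReal * ENNReal.ofReal C := by rw [sub_zero]

theorem StrictMono.invFun_eq_orderIsoOfSurjective_symm {α β : Type*} [LinearOrder α]
    [Preorder β] [Nonempty α] {g : α → β} (hg : StrictMono g) (hsurj : Surjective g) :
    invFun g = (hg.orderIsoOfSurjective g hsurj).symm :=
  funext fun y => (OrderIso.eq_symm_apply _).2 (invFun_eq (hsurj y))

theorem stmt12_general
    (f g h : ℝ → ℝ)
    (hfTV : eVariationOn f univ ≠ ⊤)
    (hgmono : StrictMono g) (hhmono : StrictMono h)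
    (hgbij : Bijective g) (hhbij : Bijective h)
    (Cd : ℝ) (hCd : ∀ x : ℝ, |invFun g x - invFun h x| ≤ Cd) :
    ∫ x : ℝ, |f (g x) - f (h x)| ≤ (eVariationOn f univ).toReal * Cd := by
  have hf : BoundedVariationOn f univ := hfTV
  have hC : ∀ y, |(hgmono.orderIsoOfSurjective g hgbij.2).symm y -
      (hhmono.orderIsoOfSurjective h hhbij.2).symm y| ≤ Cd := by
    simpa only [← hgmono.invFun_eq_orderIsoOfSurjective_symm,
      ← hhmono.invFun_eq_orderIsoOfSurjective_symm] using hCd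
  have hmeas : AEStronglyMeasurable (fun x => |f (g x) - f (h x)|) volume :=
    ((hf.measurable.comp hgmono.monotone.measurable).sub
      (hf.measurable.comp hhmono.monotone.measurable)).abs.aestronglyMeasurable
  rw [integral_eq_lintegral_of_nonneg_ae (ae_of_all _ fun x => abs_nonneg _) hmeas]
  calc (∫⁻ x, ENNReal.ofReal |f (g x) - f (h x)|).toReal
      ≤ (ENNReal.ofReal (eVariationOn f univ).toReal * ENNReal.ofReal Cd).toReal :=
        ENNReal.toReal_mono (by finiteness) (hf.lintegral_ofReal_abs_comp_sub_comp_le _ _ hC)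
    _ = (eVariationOn f univ).toReal * Cd := by
        rw [ENNReal.toReal_mul, ENNReal.toReal_ofReal ENNReal.toReal_nonneg,
          ENNReal.toReal_ofReal ((abs_nonneg _).trans (hCd 0))]

/-- For `f ∈ TV(ℝ) ∩ L^∞(ℝ)` and `g, h` bi-Lipschitz increasing
diffeomorphisms of `ℝ`, `‖f∘g − f∘h‖_{L¹(ℝ)} ≤ |f|_{TV(ℝ)} ‖g⁻¹ − h⁻¹‖_{L^∞(ℝ)}`. -/
theorem stmt12
    (f g h : ℝ → ℝ) (Cf : ℝ)
    (hfmeas : Measurable f) (hfbd : ∀ x, |f x| ≤ Cf)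
    (hfTV : eVariationOn f univ ≠ ⊤)
    (hgmono : StrictMono g) (hhmono : StrictMono h)
    (hgbij : Bijective g) (hhbij : Bijective h)
    (hglip : ∃ K : ℝ≥0, LipschitzWith K g) (hhlip : ∃ K : ℝ≥0, LipschitzWith K h)
    (hgilip : ∃ K : ℝ≥0, LipschitzWith K (invFun g))
    (hhilip : ∃ K : ℝ≥0, LipschitzWith K (invFun h))
    (Cd : ℝ) (hCd : ∀ x : ℝ, |invFun g x - invFun h x| ≤ Cd) :
    ∫ x : ℝ, |f (g x) - f (h x)| ≤ (eVariationOn f univ).toReal * Cd :=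
  stmt12_general f g h hfTV hgmono hhmono hgbij hhbij Cd hCd
end
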